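/- Let R be a commutative ring, s, t ∈ R, and n a natural number. Then s^n = Σ_{ℓ=0}^{n} C(n,ℓ) · (-1)^ℓ · P_{n,ℓ}(s,t), where P_{n,ℓ}(s,t) is the permanent of the n×n matrix having n-ℓ diagonal entries equal to s+t and all other entries equal to t. -/

import Mathlib

/-- The permanent of a square matrix: `per(M) = Σ_{σ} Π_i M_{i, σ(i)}`. -/
def permanent {α : Type*} [Fintype α] [DecidableEq α] {R : Type*} [CommSemiring R]
    (M : Matrix α α R) : R :=
  ∑ σ : Equiv.Perm α, ∏ i, M i (σ i)

/-- The `n×n` matrix `M_{n,ℓ}(s,t)` whose first `n-ℓ` diagonal entries are `s+t`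
and all of whose other entries are `t`: the `(i,j)`-entry is
`t + s·[i = j and i ≤ n-ℓ]` (`0`-indexed: `i < n-ℓ`). -/
def Mmat {R : Type*} [CommRing R] (n ℓ : ℕ) (s t : R) : Matrix (Fin n) (Fin n) R :=
  Matrix.of fun i j => t + if i = j ∧ (i : ℕ) < n - ℓ then s else 0

/-- `P_{n,ℓ}(s,t) = per(M_{n,ℓ}(s,t))`. -/
def P {R : Type*} [CommRing R] (n ℓ : ℕ) (s t : R) : R :=
  permanent (Mmat n ℓ s t)

/-
Expanding the permanent of `M_{n,ℓ}(s,t)` over the set `T` of fixed points of `σ` that pick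
up an `s`, and counting the `(n - |T|)!` permutations fixing `T` pointwise, gives
`P_{n,ℓ}(s,t) = Σ_k C(n-ℓ,k) (n-k)! s^k t^(n-k)`. The alternating sum over `ℓ` is then a
binomial inversion: `Σ_ℓ C(n,ℓ) (-1)^ℓ C(n-ℓ,k) = [k = n]`, the coefficient of `X^k` in
`((X + 1) - 1)^n`, so only the term `k = n`, namely `s^n`, survives.
-/

open Finset Nat

open Polynomial in
theorem sum_range_choose_mul_neg_one_pow_mul_choose_sub {R : Type*} [CommRing R] (n k : ℕ) :
    ∑ ℓ ∈ range (n + 1), (n.choose ℓ : R) * (-1) ^ ℓ * ((n - ℓ).choose k : R) =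
      if k = n then 1 else 0 := by
  have h : ((-1 + (X + 1)) ^ n : R[X]) = X ^ n := by ring
  rw [add_pow] at h
  rw [← coeff_X_pow, ← h, finsetSum_coeff]
  refine sum_congr rfl fun ℓ _ => ?_
  rw [show (-1 : R[X]) ^ ℓ * (X + 1) ^ (n - ℓ) * (n.choose ℓ : R[X]) =
      C ((n.choose ℓ : R) * (-1) ^ ℓ) * (X + 1) ^ (n - ℓ) by simp; ring,
    coeff_C_mul, coeff_X_add_one_pow]

theorem sum_range_choose_mul_neg_one_pow_mul_sum_range_choose {R : Type*} [CommRing R]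
    (g : ℕ → R) (n : ℕ) :
    ∑ ℓ ∈ range (n + 1), (n.choose ℓ : R) * (-1) ^ ℓ *
      ∑ k ∈ range (n + 1), ((n - ℓ).choose k : R) * g k = g n := by
  simp_rw [mul_sum, ← mul_assoc]
  rw [sum_comm]
  simp_rw [← sum_mul, sum_range_choose_mul_neg_one_pow_mul_choose_sub, ite_mul, one_mul, zero_mul]
  simp

theorem card_perm_fixing_pointwise {α : Type*} [Fintype α] [DecidableEq α] (T : Finset α) :
    #{σ : Equiv.Perm α | ∀ i ∈ T, σ i = i} = (Fintype.card α - #T)! := by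
  rw [← Fintype.card_subtype, ← Fintype.card_congr
    ((Equiv.Perm.subtypeEquivSubtypePerm (· ∉ T)).trans (Equiv.subtypeEquivRight (by simp))),
    Fintype.card_perm, Fintype.card_subtype_compl, Fintype.card_coe]

theorem permanent_const_add_diagonal_ite {α R : Type*} [Fintype α] [DecidableEq α]
    [CommSemiring R] (p : α → Prop) [DecidablePred p] (s t : R) :
    permanent (Matrix.of fun i j => t + if i = j ∧ p i then s else 0) =
      ∑ T ∈ (univ.filter p).powerset,
        ((Fintype.card α - #T)! : R) * s ^ #T * t ^ (Fintype.card α - #T) := by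
  have expand (σ : Equiv.Perm α) : ∏ i, (t + if i = σ i ∧ p i then s else 0) =
      ∑ T ∈ (univ.filter p).powerset, if ∀ i ∈ T, σ i = i then
        s ^ #T * t ^ (Fintype.card α - #T) else 0 := by
    simp_rw [add_comm t, Fintype.prod_add, prod_ite_zero, prod_const, card_compl, ite_mul,
      zero_mul]
    rw [← Fintype.sum_ite_mem (univ.filter p).powerset]
    refine Fintype.sum_congr _ _ fun T => ?_
    rw [← ite_and]
    refine if_congr ?_ rfl rfl
    simp only [mem_powerset, subset_iff, mem_filter_univ]
    grind
  simp_rw [permanent, Matrix.of_apply, expand]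
  rw [sum_comm]
  simp_rw [← sum_filter, sum_const, card_perm_fixing_pointwise, nsmul_eq_mul, mul_assoc]

theorem P_eq_sum_range {R : Type*} [CommRing R] (n ℓ : ℕ) (s t : R) :
    P n ℓ s t =
      ∑ k ∈ range (n + 1), ((n - ℓ).choose k : R) * ((n - k)! * s ^ k * t ^ (n - k)) := by
  have hcard : #{i : Fin n | (i : ℕ) < n - ℓ} = n - ℓ := by
    rw [Fin.card_filter_val_lt]; omega
  rw [P, Mmat, permanent_const_add_diagonal_ite, Fintype.card_fin,
    sum_powerset_apply_card (fun k => ((n - k)! : R) * s ^ k * t ^ (n - k)), hcard]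
  simp_rw [nsmul_eq_mul]
  refine sum_subset (range_subset_range.2 (by omega)) fun k _ hk => ?_
  rw [choose_eq_zero_of_lt (by simpa using hk), cast_zero, zero_mul]

/-- The complementary sum: `s^n = Σ_{ℓ=0}^{n} C(n,ℓ) (-1)^ℓ P_{n,ℓ}(s,t)`. -/
theorem stmt15 {R : Type*} [CommRing R] (s t : R) (n : ℕ) :
    s ^ n =
      ∑ ℓ ∈ Finset.range (n + 1),
        (n.choose ℓ : R) * (-1 : R) ^ ℓ * P n ℓ s t := by
  simp_rw [P_eq_sum_range, sum_range_choose_mul_neg_one_pow_mul_sum_range_choose, Nat.sub_self]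
  simp
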